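/- Let u be a λ-mode solution with initial data (0,ψ), where ψ is smooth and compactly supported in (2M,∞). If the zero function is a forward radiation field of u at the event horizon (i.e., for every τ ∈ ℝ, ∂ₜu(τ − r_*(r), r) → 0 as r → 2M from the right), then ψ = 0 identically on (2M,∞). (Event-horizon half of Corollary 1.4, for a single spherical-harmonic mode.) -/

import Mathlib

open MeasureTheory Filter Set Function
open scoped ContDiff

/-- The tortoise coordinate `r_* = r + 2M log(r - 2M)`. -/
noncomputable def rstar (M r : ℝ) : ℝ := r + 2*M*Real.log (r - 2*M)

/-- Partial derivative of `u` in the first (time) variable. -/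
noncomputable def pdt (u : ℝ → ℝ → ℝ) (t r : ℝ) : ℝ := deriv (fun s => u s r) t

/-- Second partial derivative of `u` in the first (time) variable. -/
noncomputable def pdtt (u : ℝ → ℝ → ℝ) (t r : ℝ) : ℝ := deriv (fun s => pdt u s r) t

/-- Partial derivative of `u` in the second (radial) variable. -/
noncomputable def pdr (u : ℝ → ℝ → ℝ) (t r : ℝ) : ℝ := deriv (fun s => u t s) r

/-- Second partial derivative of `u` in the second (radial) variable. -/
noncomputable def pdrr (u : ℝ → ℝ → ℝ) (t r : ℝ) : ℝ := deriv (fun s => pdr u t s) r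

/-- `u(t,r)` is a λ-mode solution of the wave equation on the mass-`M`
Schwarzschild exterior: it is smooth on `ℝ × (2M,∞)` and satisfies
`−(r/(r−2M))·∂²ₜu + ((r−2M)/r)·∂²ᵣu + (2(r−M)/r²)·∂ᵣu − (λ²/r²)·u = 0` there. -/
def IsModeSolution (M lam : ℝ) (u : ℝ → ℝ → ℝ) : Prop :=
  ContDiffOn ℝ ∞ (Function.uncurry u) ((Set.univ : Set ℝ) ×ˢ Set.Ioi (2*M)) ∧
  ∀ t r : ℝ, 2*M < r →
    -(r/(r-2*M)) * pdtt u t r + ((r-2*M)/r) * pdrr u t r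
      + (2*(r-M)/r^2) * pdr u t r - lam^2/r^2 * u t r = 0

/-- `f` is a forward radiation field of `u` at the event horizon:
`∂ₜu(τ − r_*(r), r) → f(τ)` as `r → 2M⁺`. -/
def IsFwdRadHorizon (M : ℝ) (u : ℝ → ℝ → ℝ) (f : ℝ → ℝ) : Prop :=
  ∀ τ : ℝ, Filter.Tendsto (fun r => pdt u (τ - rstar M r) r)
    (nhdsWithin (2*M) (Set.Ioi (2*M))) (nhds (f τ))

/-- `f` is a backward radiation field of `u` at the event horizon:
`∂ₜu(τ + r_*(r), r) → f(τ)` as `r → 2M⁺`. -/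
def IsBwdRadHorizon (M : ℝ) (u : ℝ → ℝ → ℝ) (f : ℝ → ℝ) : Prop :=
  ∀ τ : ℝ, Filter.Tendsto (fun r => pdt u (τ + rstar M r) r)
    (nhdsWithin (2*M) (Set.Ioi (2*M))) (nhds (f τ))

/-- `g` is a forward radiation field of `u` at null infinity:
`r·∂ₜu(τ̄ + r_*(r), r) → g(τ̄)` as `r → ∞`. -/
def IsFwdRadInfty (M : ℝ) (u : ℝ → ℝ → ℝ) (g : ℝ → ℝ) : Prop :=
  ∀ τ : ℝ, Filter.Tendsto (fun r => r * pdt u (τ + rstar M r) r)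
    Filter.atTop (nhds (g τ))

/-- `g` is a backward radiation field of `u` at null infinity:
`r·∂ₜu(τ̄ − r_*(r), r) → g(τ̄)` as `r → ∞`. -/
def IsBwdRadInfty (M : ℝ) (u : ℝ → ℝ → ℝ) (g : ℝ → ℝ) : Prop :=
  ∀ τ : ℝ, Filter.Tendsto (fun r => r * pdt u (τ - rstar M r) r)
    Filter.atTop (nhds (g τ))

/-!
Write `g(t, x) = r u(t, r)` with `r = r(x)` the inverse of the tortoise coordinate. Then `g`
solves the Regge–Wheeler equation `∂ₜ²g - ∂ₓ²g + V(x) g = 0` on all of `ℝ²`, with `V ≥ 0` and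
`∫_{-∞}^x V = O(e^{x/2M})` towards the horizon `x → -∞`. In the null coordinates `a = t + x`,
`b = t - x` this is a first-order system for `η = g`, `A = ∂_a η`, `B = ∂_b η`, with data
`η = 0`, `A = B = rψ/2` on `t = 0`.

A Picard iteration bounds `η` on `t ≥ 0` by `c₁ exp (C e^{a/2M})`, uniformly in `b`. Since the
potential decays along the horizon `b → ∞`, this forces `B → 0` there, and the vanishing
radiation field `A + B → 0` then gives `A → 0`. Integrating `∂_b A = -(V/4) η` back from the
horizon shows that once `η` vanishes for `a ≤ s`, the supremum of `|η|` over the strip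
`a ≤ s + 1/(K+1)` is at most half of itself, where `K = ∫ V`. Starting from finite speed of
propagation (`η = 0` for `a` left of the support of `ψ`), induction over strips gives `g = 0`
for `t ≥ 0`, hence `ψ = ∂ₜu(0, ·) = 0`.
-/

open Real Topology intervalIntegral

lemma abs_integral_mul_le_of_hasDerivAt {w W f : ℝ → ℝ} {p q m : ℝ} (hpq : p ≤ q)
    (hW : ∀ x, HasDerivAt W (w x) x) (hw : Continuous w) (hw0 : ∀ x, 0 ≤ w x)
    (hf : Continuous f) (hfm : ∀ x ∈ Icc p q, |f x| ≤ m) :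
    |∫ x in p..q, w x * f x| ≤ m * (W q - W p) := by
  calc |∫ x in p..q, w x * f x| ≤ ∫ x in p..q, |w x * f x| :=
        abs_integral_le_integral_abs hpq
    _ ≤ ∫ x in p..q, m * w x := by
        refine integral_mono_on hpq ((hw.mul hf).abs.intervalIntegrable p q)
          ((hw.const_mul m).intervalIntegrable p q) fun x hx => ?_
        rw [abs_mul, abs_of_nonneg (hw0 x), mul_comm m]
        exact mul_le_mul_of_nonneg_left (hfm x hx) (hw0 x)
    _ = m * (W q - W p) := by
        rw [intervalIntegral.integral_const_mul, integral_eq_sub_of_hasDerivAt (fun x _ => hW x)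
          (hw.intervalIntegrable p q)]

lemma abs_intervalIntegral_le_integral_abs {f : ℝ → ℝ} (hf : Integrable f) (p q : ℝ) :
    |∫ x in p..q, f x| ≤ ∫ x, |f x| := by
  have h := norm_integral_le_integral_norm_uIoc (f := f) (μ := volume) (a := p) (b := q)
  simp only [Real.norm_eq_abs] at h
  exact h.trans (setIntegral_le_integral hf.abs (Eventually.of_forall fun _ => abs_nonneg _))

lemma HasDerivAt.eq_zero_of_forall_ge {f : ℝ → ℝ} {f' a : ℝ} (hf : HasDerivAt f f' a)
    (h : ∀ s, a ≤ s → f s = 0) : f' = 0 :=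
  (uniqueDiffWithinAt_Ici a).eq_deriv _ hf.hasDerivWithinAt
    ((hasDerivWithinAt_const a _ 0).congr (fun s hs => h s hs) (h a le_rfl))

/-- The `n`-th Picard iterate, started from the constant `N`, of the integral inequality
`m(h) ≤ c₁ + ∫₀ʰ m`. -/
noncomputable def picardMajorant (c₁ N : ℝ) (n : ℕ) (h : ℝ) : ℝ :=
  c₁ * ∑ k ∈ Finset.range n, h ^ k / k.factorial + N * (h ^ n / n.factorial)

lemma hasDerivAt_pow_succ_div_factorial (k : ℕ) (h : ℝ) :
    HasDerivAt (fun h : ℝ => h ^ (k + 1) / (k + 1).factorial) (h ^ k / k.factorial) h := by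
  refine ((hasDerivAt_pow (k + 1) h).div_const _).congr_deriv ?_
  rw [Nat.factorial_succ, Nat.cast_mul, Nat.add_sub_cancel]
  field_simp

lemma picardMajorant_succ (c₁ N : ℝ) (n : ℕ) : picardMajorant c₁ N (n + 1) = fun h : ℝ =>
    c₁ + c₁ * ∑ k ∈ Finset.range n, h ^ (k + 1) / (k + 1).factorial
      + N * (h ^ (n + 1) / (n + 1).factorial) := by
  ext h
  simp [picardMajorant, Finset.sum_range_succ', mul_add, add_comm]

lemma hasDerivAt_picardMajorant_succ (c₁ N : ℝ) (n : ℕ) (h : ℝ) :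
    HasDerivAt (picardMajorant c₁ N (n + 1)) (picardMajorant c₁ N n h) h := by
  have hsum : HasDerivAt (fun h : ℝ => ∑ k ∈ Finset.range n, h ^ (k + 1) / (k + 1).factorial)
      (∑ k ∈ Finset.range n, h ^ k / k.factorial) h :=
    HasDerivAt.fun_sum fun k _ => hasDerivAt_pow_succ_div_factorial k h
  rw [picardMajorant_succ]
  exact ((hsum.const_mul c₁).const_add c₁).add
    ((hasDerivAt_pow_succ_div_factorial n h).const_mul N)

lemma picardMajorant_nonneg {c₁ N h : ℝ} (hc₁ : 0 ≤ c₁) (hN : 0 ≤ N) (hh : 0 ≤ h) (n : ℕ) :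
    0 ≤ picardMajorant c₁ N n h := by
  unfold picardMajorant
  have := Finset.sum_nonneg fun k (_ : k ∈ Finset.range n) =>
    div_nonneg (pow_nonneg hh k) (Nat.cast_nonneg (α := ℝ) k.factorial)
  positivity

lemma le_picardMajorant_succ {c₁ N h : ℝ} (hc₁ : 0 ≤ c₁) (hN : 0 ≤ N) (hh : 0 ≤ h) (n : ℕ) :
    c₁ ≤ picardMajorant c₁ N (n + 1) h := by
  rw [picardMajorant_succ]
  have := Finset.sum_nonneg fun k (_ : k ∈ Finset.range n) =>
    div_nonneg (pow_nonneg hh (k + 1)) (Nat.cast_nonneg (α := ℝ) (k + 1).factorial)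
  have : 0 ≤ N * (h ^ (n + 1) / (n + 1).factorial) := by positivity
  nlinarith

lemma picardMajorant_le {c₁ N h : ℝ} (hc₁ : 0 ≤ c₁) (hh : 0 ≤ h) (n : ℕ) :
    picardMajorant c₁ N n h ≤ c₁ * exp h + N * (h ^ n / n.factorial) := by
  unfold picardMajorant
  gcongr
  exact sum_le_exp_of_nonneg hh n

lemma tendsto_picardMajorant (c₁ N h : ℝ) :
    Tendsto (fun n => c₁ * exp h + N * (h ^ n / n.factorial)) atTop (𝓝 (c₁ * exp h)) := by
  simpa using ((FloorSemiring.tendsto_pow_div_factorial_atTop h).const_mul N).const_add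
    (c₁ * exp h)

/-! ### The characteristic initial value problem -/

/-- The wave equation `∂ₜ²g - ∂ₓ²g + V(x) g = 0` written in the null coordinates `a = t + x`,
`b = t - x`, with `η(a, b) = g(t, x)`, `A = ∂_a η` and `B = ∂_b η`; the time slice `t = 0` is
the antidiagonal `b = -a`. -/
structure IsCharacteristicSystem (V : ℝ → ℝ) (η A B : ℝ → ℝ → ℝ) : Prop where
  hasDerivAt_eta : ∀ a b, HasDerivAt (η · b) (A a b) a
  hasDerivAt_A : ∀ a b, HasDerivAt (A a ·) (-(V ((a - b) / 2) / 4 * η a b)) b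
  hasDerivAt_B : ∀ a b, HasDerivAt (B · b) (-(V ((a - b) / 2) / 4 * η a b)) a
  continuous_eta : Continuous (uncurry η)
  continuous_A : Continuous (uncurry A)

structure PotentialBounds (V G : ℝ → ℝ) (c κ K : ℝ) : Prop where
  continuous : Continuous V
  nonneg : ∀ x, 0 ≤ V x
  hasDerivAt : ∀ x, HasDerivAt G (V x) x
  primitive_nonneg : ∀ x, 0 ≤ G x
  primitive_le : ∀ x, G x ≤ K
  primitive_le_exp : ∀ x, G x ≤ c * exp (κ * x)
  exponent_pos : 0 < κ

noncomputable def gronwallExponent (c κ x : ℝ) : ℝ := c / (2 * κ) * exp (κ * x)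

namespace PotentialBounds

variable {V G : ℝ → ℝ} {c κ K : ℝ} (hV : PotentialBounds V G c κ K)
include hV

lemma coeff_nonneg : 0 ≤ c := by
  simpa using (hV.primitive_nonneg 0).trans (hV.primitive_le_exp 0)

lemma bound_nonneg : 0 ≤ K := (hV.primitive_nonneg 0).trans (hV.primitive_le 0)

lemma hasDerivAt_gronwallExponent (x : ℝ) :
    HasDerivAt (gronwallExponent c κ) (c / 2 * exp (κ * x)) x := by
  refine (((hasDerivAt_id x).const_mul κ).exp.const_mul (c / (2 * κ))).congr_deriv ?_
  field_simp [hV.exponent_pos.ne']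
  rfl

lemma gronwallExponent_nonneg (x : ℝ) : 0 ≤ gronwallExponent c κ x := by
  have := hV.coeff_nonneg
  have := hV.exponent_pos
  unfold gronwallExponent
  positivity

lemma monotone_gronwallExponent : Monotone (gronwallExponent c κ) := fun x y hxy => by
  have := hV.coeff_nonneg
  have := hV.exponent_pos
  unfold gronwallExponent
  gcongr

end PotentialBounds

namespace IsCharacteristicSystem

variable {V G : ℝ → ℝ} {c κ K : ℝ} {η A B : ℝ → ℝ → ℝ}
  (hs : IsCharacteristicSystem V η A B)
include hs

lemma eta_eq_integral (hη0 : ∀ a, η a (-a) = 0) (a b : ℝ) :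
    η a b = ∫ α in -b..a, A α b := by
  rw [integral_eq_sub_of_hasDerivAt (fun α _ => hs.hasDerivAt_eta α b)
    ((hs.continuous_A.comp (continuous_id.prodMk continuous_const)).intervalIntegrable _ _)]
  have := hη0 (-b)
  rw [neg_neg] at this
  rw [this, sub_zero]

lemma exists_abs_eta_le (a b : ℝ) :
    ∃ N, 0 ≤ N ∧ ∀ α β, -α ≤ β → α ≤ a → β ≤ b → |η α β| ≤ N := by
  obtain ⟨N, hN⟩ := (isCompact_Icc (a := -b) (b := a)).prod (isCompact_Icc (a := -a) (b := b))
    |>.exists_bound_of_continuousOn hs.continuous_eta.continuousOn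
  refine ⟨max N 0, le_max_right _ _, fun α β hαβ hαa hβb => ?_⟩
  exact (hN (α, β) ⟨⟨by linarith, hαa⟩, ⟨by linarith, hβb⟩⟩).trans (le_max_left _ _)

lemma abs_eta_le_mul_sub (hη0 : ∀ a, η a (-a) = 0) {a b s m : ℝ} (hab : -a ≤ b) (hsa : s ≤ a)
    (hA0 : ∀ α ∈ Icc (-b) s, A α b = 0) (hAm : ∀ α ∈ Icc (-b) a, |A α b| ≤ m) :
    |η a b| ≤ m * (a - s) := by
  have hm : 0 ≤ m := (abs_nonneg _).trans (hAm a ⟨by linarith, le_rfl⟩)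
  have hcontA : Continuous (A · b) := hs.continuous_A.comp (continuous_id.prodMk continuous_const)
  obtain ⟨p, hp⟩ : ∃ p, p = max (-b) s := ⟨_, rfl⟩
  have hbp : -b ≤ p := hp ▸ le_max_left _ _
  have hsp : s ≤ p := hp ▸ le_max_right _ _
  have hpa : p ≤ a := hp ▸ max_le (by linarith) hsa
  have hhead : ∫ α in -b..p, A α b = 0 := by
    rcases le_total (-b) s with hbs | hbs
    · rw [hp, max_eq_right hbs, integral_congr (g := 0) fun α hα => by
        rw [uIcc_of_le hbs] at hα; exact hA0 α hα]
      simp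
    · rw [hp, max_eq_left hbs, integral_same]
  rw [hs.eta_eq_integral hη0, ← integral_add_adjacent_intervals (b := p)
    (hcontA.intervalIntegrable _ _) (hcontA.intervalIntegrable _ _), hhead, zero_add]
  have hbd : ∀ α ∈ uIoc p a, ‖A α b‖ ≤ m := fun α hα => by
    rw [uIoc_of_le hpa] at hα
    exact hAm α ⟨by linarith [hα.1], hα.2⟩
  calc |∫ α in p..a, A α b| ≤ m * |a - p| := norm_integral_le_of_norm_le_const hbd
    _ ≤ m * (a - s) := by
        rw [abs_of_nonneg (by linarith)]
        gcongr

variable (hV : PotentialBounds V G c κ K)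
include hV

lemma abs_A_sub_le {a p q m : ℝ} (hpq : p ≤ q)
    (hm : ∀ β ∈ Icc p q, |η a β| ≤ m) :
    |A a q - A a p| ≤ m / 2 * (G ((a - p) / 2) - G ((a - q) / 2)) := by
  have hw : Continuous fun β => V ((a - β) / 2) / 4 := by
    have := hV.continuous; fun_prop
  have hη : Continuous (η a) := hs.continuous_eta.comp (continuous_const.prodMk continuous_id)
  rw [← integral_eq_sub_of_hasDerivAt (fun β _ => hs.hasDerivAt_A a β)
    ((hw.mul hη).neg.intervalIntegrable _ _), intervalIntegral.integral_neg, abs_neg]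
  refine (abs_integral_mul_le_of_hasDerivAt hpq (W := fun β => -(G ((a - β) / 2) / 2))
    (fun β => ?_) hw (fun β => by have := hV.nonneg ((a - β) / 2); positivity) hη hm).trans_eq
    (by ring)
  refine ((hV.hasDerivAt _).comp β (((hasDerivAt_id β).const_sub a).div_const 2)).div_const 2
    |>.neg.congr_deriv ?_
  simp only [id]; ring

lemma abs_B_sub_le {b p q m : ℝ} (hpq : p ≤ q)
    (hm : ∀ α ∈ Icc p q, |η α b| ≤ m) :
    |B q b - B p b| ≤ m / 2 * (G ((q - b) / 2) - G ((p - b) / 2)) := by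
  have hw : Continuous fun α => V ((α - b) / 2) / 4 := by
    have := hV.continuous; fun_prop
  have hη : Continuous (η · b) := hs.continuous_eta.comp (continuous_id.prodMk continuous_const)
  rw [← integral_eq_sub_of_hasDerivAt (fun α _ => hs.hasDerivAt_B α b)
    ((hw.mul hη).neg.intervalIntegrable _ _), intervalIntegral.integral_neg, abs_neg]
  refine (abs_integral_mul_le_of_hasDerivAt hpq (W := fun α => G ((α - b) / 2) / 2)
    (fun α => ?_) hw (fun α => by have := hV.nonneg ((α - b) / 2); positivity) hη hm).trans_eq
    (by ring)
  refine ((hV.hasDerivAt _).comp α (((hasDerivAt_id α).sub_const b).div_const 2)).div_const 2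
    |>.congr_deriv ?_
  simp only [id]; ring

lemma abs_eta_le_picardMajorant (hη0 : ∀ a, η a (-a) = 0) {a b c₁ N : ℝ} (hc₁ : 0 ≤ c₁)
    (hN0 : 0 ≤ N) (hN : ∀ α β, -α ≤ β → α ≤ a → β ≤ b → |η α β| ≤ N)
    (hχ : ∀ p q, p ≤ q → q ≤ a → |∫ x in p..q, A x (-x)| ≤ c₁) (n : ℕ) :
    ∀ α β, -α ≤ β → α ≤ a → β ≤ b →
      |η α β| ≤ picardMajorant c₁ N n (gronwallExponent c κ α) := by
  induction n with
  | zero => simpa [picardMajorant] using hN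
  | succ n ih =>
    intro α β hαβ hαa hβb
    have hβα : -β ≤ α := by linarith
    set P := fun x => picardMajorant c₁ N n (gronwallExponent c κ x)
    have hcontP : Continuous P := by unfold P picardMajorant gronwallExponent; fun_prop
    have hcontR : Continuous fun x => P x * (c / 2 * exp (κ * x)) := by fun_prop
    have hcontχ : Continuous fun x => A x (-x) :=
      hs.continuous_A.comp (continuous_id.prodMk continuous_neg)
    have hcontA : Continuous (A · β) :=
      hs.continuous_A.comp (continuous_id.prodMk continuous_const)
    have hdefect : ∀ x ∈ Ioc (-β) α, |A x β - A x (-x)| ≤ P x * (c / 2 * exp (κ * x)) := by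
      intro x hx
      have hP : 0 ≤ P x :=
        picardMajorant_nonneg hc₁ hN0 (hV.gronwallExponent_nonneg x) n
      calc |A x β - A x (-x)| ≤ P x / 2 * (G ((x - -x) / 2) - G ((x - β) / 2)) :=
            hs.abs_A_sub_le hV (by linarith [hx.1])
              fun y hy => ih x y (by linarith [hy.1]) (by linarith [hx.2]) (by linarith [hy.2])
        _ ≤ P x * (c / 2 * exp (κ * x)) := by
            have h1 := hV.primitive_nonneg ((x - β) / 2)
            have h2 := hV.primitive_le_exp x
            rw [show (x - -x) / 2 = x by ring]
            nlinarith
    have hFTC : ∫ x in -β..α, P x * (c / 2 * exp (κ * x))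
        = picardMajorant c₁ N (n + 1) (gronwallExponent c κ α)
          - picardMajorant c₁ N (n + 1) (gronwallExponent c κ (-β)) :=
      integral_eq_sub_of_hasDerivAt
        (fun x _ => (hasDerivAt_picardMajorant_succ c₁ N n _).comp x
          (hV.hasDerivAt_gronwallExponent x))
        (hcontR.intervalIntegrable _ _)
    have hsplit : η α β = (∫ x in -β..α, A x (-x)) + ∫ x in -β..α, (A x β - A x (-x)) := by
      have hcontD : Continuous fun x => A x β - A x (-x) := hcontA.sub hcontχ
      rw [← integral_add (hcontχ.intervalIntegrable _ _) (hcontD.intervalIntegrable _ _),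
        hs.eta_eq_integral hη0]
      simp
    calc |η α β| ≤ |∫ x in -β..α, A x (-x)| + |∫ x in -β..α, (A x β - A x (-x))| := by
          rw [hsplit]; exact abs_add_le _ _
      _ ≤ c₁ + ∫ x in -β..α, P x * (c / 2 * exp (κ * x)) := by
          gcongr
          · exact hχ _ _ hβα hαa
          · exact norm_integral_le_of_norm_le (f := fun x => A x β - A x (-x)) hβα
              (Eventually.of_forall hdefect)
              (hcontR.intervalIntegrable _ _)
      _ ≤ picardMajorant c₁ N (n + 1) (gronwallExponent c κ α) := by
          rw [hFTC]
          linarith [le_picardMajorant_succ hc₁ hN0 (hV.gronwallExponent_nonneg (-β)) n]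

lemma abs_eta_le_of_abs_integral_le (hη0 : ∀ a, η a (-a) = 0) {a b c₁ : ℝ} (hab : -a ≤ b)
    (hc₁ : 0 ≤ c₁) (hχ : ∀ p q, p ≤ q → q ≤ a → |∫ x in p..q, A x (-x)| ≤ c₁) :
    |η a b| ≤ c₁ * exp (gronwallExponent c κ a) := by
  obtain ⟨N, hN0, hN⟩ := hs.exists_abs_eta_le a b
  refine ge_of_tendsto' (tendsto_picardMajorant c₁ N _) fun n => ?_
  exact (hs.abs_eta_le_picardMajorant hV hη0 hc₁ hN0 hN hχ n a b hab le_rfl le_rfl).trans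
    (picardMajorant_le hc₁ (hV.gronwallExponent_nonneg a) n)

lemma eta_eq_zero_of_lt (hη0 : ∀ a, η a (-a) = 0) {x₁ a b : ℝ} (hχ : ∀ x < x₁, A x (-x) = 0)
    (ha : a < x₁) (hab : -a ≤ b) : η a b = 0 := by
  have := hs.abs_eta_le_of_abs_integral_le hV hη0 hab le_rfl fun p q hpq hqa => by
    rw [integral_congr fun x hx => hχ x (by
      rw [uIcc_of_le hpq] at hx; linarith [hx.2])]
    simp
  simpa using this

lemma tendsto_B_atTop {x₁ a C : ℝ} (hAB0 : ∀ a, A a (-a) = B a (-a))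
    (hχ : ∀ x < x₁, A x (-x) = 0) (hC : ∀ α b, -α ≤ b → α ≤ a → |η α b| ≤ C) :
    Tendsto (B a) atTop (𝓝 0) := by
  have hC0 : 0 ≤ C := (abs_nonneg _).trans (hC a (-a) le_rfl le_rfl)
  have hc := hV.coeff_nonneg
  have hbound : ∀ᶠ b in atTop, ‖B a b‖ ≤ C / 2 * (c * exp (κ * ((a - b) / 2))) := by
    filter_upwards [eventually_ge_atTop (-a), eventually_gt_atTop (-x₁)] with b hab hb
    have hB0 : B (-b) b = 0 := by
      have := hAB0 (-b)
      have hA0 := hχ (-b) (by linarith)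
      rw [neg_neg] at this hA0
      rw [← this, hA0]
    have hdiff := hs.abs_B_sub_le hV (by linarith : -b ≤ a)
      fun α hα => hC α b (by linarith [hα.1]) hα.2
    rw [hB0, sub_zero] at hdiff
    rw [Real.norm_eq_abs]
    refine hdiff.trans (mul_le_mul_of_nonneg_left ?_ (by positivity))
    linarith [hV.primitive_nonneg ((-b - b) / 2), hV.primitive_le_exp ((a - b) / 2)]
  refine squeeze_zero_norm' hbound ?_
  have hlin : Tendsto (fun b : ℝ => κ * ((a - b) / 2)) atTop atBot :=
    ((tendsto_atBot_add_const_left _ a tendsto_neg_atTop_atBot).atBot_div_const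
      two_pos).const_mul_atBot hV.exponent_pos
  simpa using ((tendsto_exp_atBot.comp hlin).const_mul c).const_mul (C / 2)

lemma abs_A_le_of_tendsto_atTop {a b m : ℝ} (hA : Tendsto (A a) atTop (𝓝 0))
    (hm : ∀ β, b ≤ β → |η a β| ≤ m) : |A a b| ≤ m / 2 * K := by
  have hm0 : 0 ≤ m := (abs_nonneg _).trans (hm b le_rfl)
  refine ge_of_tendsto (by simpa using hA.abs.add_const (m / 2 * K)) ?_
  filter_upwards [eventually_ge_atTop b] with β hbβ
  have hdiff := hs.abs_A_sub_le hV hbβ fun y hy => hm y hy.1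
  have h1 := hV.primitive_le ((a - b) / 2)
  have h2 := hV.primitive_nonneg ((a - β) / 2)
  have h3 : m / 2 * (G ((a - b) / 2) - G ((a - β) / 2)) ≤ m / 2 * K := by
    gcongr; linarith
  have := abs_sub_abs_le_abs_sub (A a b) (A a β)
  rw [abs_sub_comm] at this
  linarith

lemma eta_eq_zero_of_eta_eq_zero_le (hη0 : ∀ a, η a (-a) = 0)
    (hA : ∀ a, Tendsto (A a) atTop (𝓝 0)) {s C : ℝ}
    (hC : ∀ a b, -a ≤ b → a ≤ s + 1 / (K + 1) → |η a b| ≤ C)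
    (hzero : ∀ a b, -a ≤ b → a ≤ s → η a b = 0) :
    ∀ a b, -a ≤ b → a ≤ s + 1 / (K + 1) → η a b = 0 := by
  set δ := 1 / (K + 1) with hδ
  have hK := hV.bound_nonneg
  have hδ0 : 0 < δ := by positivity
  have hKδ : K * δ < 1 := by
    rw [hδ, mul_one_div, div_lt_one (by linarith)]; linarith
  set S := (fun p : ℝ × ℝ => |η p.1 p.2|) '' {p | -p.1 ≤ p.2 ∧ p.1 ≤ s + δ}
  have hS : BddAbove S := ⟨C, by rintro _ ⟨p, hp, rfl⟩; exact hC p.1 p.2 hp.1 hp.2⟩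
  set μ := sSup S
  have hμ : ∀ a b, -a ≤ b → a ≤ s + δ → |η a b| ≤ μ := fun a b hab ha =>
    le_csSup hS ⟨(a, b), ⟨hab, ha⟩, rfl⟩
  have hμ0 : 0 ≤ μ := (abs_nonneg _).trans (hμ s (-s) le_rfl (by linarith))
  have hη : ∀ a b, -a ≤ b → a ≤ s + δ → |η a b| ≤ μ / 2 * K * δ := by
    intro a b hab ha
    rcases le_or_gt a s with has | has
    · rw [hzero a b hab has, abs_zero]; positivity
    refine (hs.abs_eta_le_mul_sub hη0 hab has.le (fun α hα => ?_) (fun α hα =>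
      hs.abs_A_le_of_tendsto_atTop hV (hA α) fun β hβ =>
        hμ α β (by linarith [hα.1]) (by linarith [hα.2]))).trans ?_
    · exact abs_nonpos_iff.mp <| by
        simpa using hs.abs_A_le_of_tendsto_atTop hV (hA α) (b := b) (m := 0) fun β hβ => by
          rw [hzero α β (by linarith [hα.1]) hα.2, abs_zero]
    · gcongr
      linarith
  have hμle : μ ≤ μ / 2 * K * δ :=
    csSup_le ⟨_, (s, -s), ⟨le_rfl, by linarith⟩, rfl⟩ fun _ ⟨p, hp, hx⟩ =>
      hx ▸ hη p.1 p.2 hp.1 hp.2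
  have hμz : μ = 0 := by nlinarith
  intro a b hab ha
  exact abs_nonpos_iff.mp (hμz ▸ hμ a b hab ha)

theorem eta_eq_zero (hη0 : ∀ a, η a (-a) = 0) (hAB0 : ∀ a, A a (-a) = B a (-a)) {x₁ x₂ : ℝ}
    (hχ : ∀ x ∉ Icc x₁ x₂, A x (-x) = 0)
    (hrad : ∀ a, Tendsto (fun b => A a b + B a b) atTop (𝓝 0)) :
    ∀ a b, -a ≤ b → η a b = 0 := by
  have hcontχ : Continuous fun x => A x (-x) :=
    hs.continuous_A.comp (continuous_id.prodMk continuous_neg)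
  have hsupp : HasCompactSupport fun x => A x (-x) :=
    HasCompactSupport.intro isCompact_Icc hχ
  have hχ₁ : ∀ x < x₁, A x (-x) = 0 := fun x hx => hχ x fun h => by linarith [h.1]
  set c₁ := ∫ x, |A x (-x)|
  have hc₁ : 0 ≤ c₁ := integral_nonneg fun _ => abs_nonneg _
  have hbound : ∀ a α b, -α ≤ b → α ≤ a → |η α b| ≤ c₁ * exp (gronwallExponent c κ a) :=
    fun a α b hαb hαa =>
      (hs.abs_eta_le_of_abs_integral_le hV hη0 hαb hc₁ fun p q _ _ =>
        abs_intervalIntegral_le_integral_abs (hcontχ.integrable_of_hasCompactSupport hsupp) p q)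
      |>.trans      (by gcongr; exact hV.monotone_gronwallExponent hαa)
  have hA : ∀ a, Tendsto (A a) atTop (𝓝 0) := fun a => by
    simpa using (hrad a).sub (hs.tendsto_B_atTop hV hAB0 hχ₁ (hbound a))
  set δ := 1 / (K + 1)
  have hδ : 0 < δ := by have := hV.bound_nonneg; positivity
  have hstrip : ∀ n : ℕ, ∀ a b, -a ≤ b → a ≤ x₁ - 1 + n * δ → η a b = 0 := by
    intro n
    induction n with
    | zero =>
      intro a b hab ha
      exact hs.eta_eq_zero_of_lt hV hη0 hχ₁ (by simp at ha; linarith) hab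
    | succ n ih =>
      intro a b hab ha
      refine hs.eta_eq_zero_of_eta_eq_zero_le hV hη0 hA
        (fun a b hab ha => hbound _ a b hab ha) ih a b hab ?_
      push_cast at ha; linarith
  intro a b hab
  obtain ⟨n, hn⟩ := exists_nat_ge ((a - (x₁ - 1)) / δ)
  exact hstrip n a b hab (by rw [div_le_iff₀ hδ] at hn; linarith)

end IsCharacteristicSystem

/-! ### Partial derivatives and null coordinates -/

section PartialDerivatives

variable {f : ℝ → ℝ → ℝ} {t r : ℝ}

lemma hasDerivAt_fderiv_fst (hf : DifferentiableAt ℝ (uncurry f) (t, r)) :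
    HasDerivAt (f · r) (fderiv ℝ (uncurry f) (t, r) (1, 0)) t := by
  have h := hf.hasFDerivAt.comp_hasDerivAt t ((hasDerivAt_id t).prodMk (hasDerivAt_const t r))
  exact h

lemma hasDerivAt_fderiv_snd (hf : DifferentiableAt ℝ (uncurry f) (t, r)) :
    HasDerivAt (f t ·) (fderiv ℝ (uncurry f) (t, r) (0, 1)) r := by
  have h := hf.hasFDerivAt.comp_hasDerivAt r ((hasDerivAt_const r t).prodMk (hasDerivAt_id r))
  exact h

lemma pdt_eq_fderiv (hf : DifferentiableAt ℝ (uncurry f) (t, r)) :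
    pdt f t r = fderiv ℝ (uncurry f) (t, r) (1, 0) :=
  (hasDerivAt_fderiv_fst hf).deriv

lemma pdr_eq_fderiv (hf : DifferentiableAt ℝ (uncurry f) (t, r)) :
    pdr f t r = fderiv ℝ (uncurry f) (t, r) (0, 1) :=
  (hasDerivAt_fderiv_snd hf).deriv

lemma hasDerivAt_pdt (hf : DifferentiableAt ℝ (uncurry f) (t, r)) :
    HasDerivAt (f · r) (pdt f t r) t :=
  pdt_eq_fderiv hf ▸ hasDerivAt_fderiv_fst hf

lemma hasDerivAt_pdr (hf : DifferentiableAt ℝ (uncurry f) (t, r)) :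
    HasDerivAt (f t ·) (pdr f t r) r :=
  pdr_eq_fderiv hf ▸ hasDerivAt_fderiv_snd hf

variable {s : Set (ℝ × ℝ)} {m n : WithTop ℕ∞}

lemma ContDiffOn.uncurry_pdt (hs : IsOpen s) (hf : ContDiffOn ℝ n (uncurry f) s)
    (hmn : m + 1 ≤ n) : ContDiffOn ℝ m (uncurry (pdt f)) s :=
  ((hf.fderiv_of_isOpen hs hmn).clm_apply contDiffOn_const).congr fun p hp =>
    pdt_eq_fderiv (((hf.contDiffAt (hs.mem_nhds hp)).differentiableAt
      (ne_bot_of_le_ne_bot (by simp) hmn)))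

lemma ContDiffOn.uncurry_pdr (hs : IsOpen s) (hf : ContDiffOn ℝ n (uncurry f) s)
    (hmn : m + 1 ≤ n) : ContDiffOn ℝ m (uncurry (pdr f)) s :=
  ((hf.fderiv_of_isOpen hs hmn).clm_apply contDiffOn_const).congr fun p hp =>
    pdr_eq_fderiv (((hf.contDiffAt (hs.mem_nhds hp)).differentiableAt
      (ne_bot_of_le_ne_bot (by simp) hmn)))

lemma pdr_pdt_eq_pdt_pdr (hf : ContDiff ℝ 2 (uncurry f)) (t r : ℝ) :
    pdr (pdt f) t r = pdt (pdr f) t r := by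
  set F := uncurry f
  have hF : Differentiable ℝ F := hf.differentiable (by simp)
  have hF' : Differentiable ℝ (fderiv ℝ F) := (hf.fderiv_right (m := 1) le_rfl).differentiable
    (by simp)
  have hpartial : ∀ v : ℝ × ℝ, HasFDerivAt (fun p => fderiv ℝ F p v)
      ((ContinuousLinearMap.apply ℝ ℝ v).comp (fderiv ℝ (fderiv ℝ F) (t, r))) (t, r) :=
    fun v => (ContinuousLinearMap.apply ℝ ℝ v).hasFDerivAt.comp (t, r) (hF' _).hasFDerivAt
  have ht : uncurry (pdt f) = fun p => fderiv ℝ F p (1, 0) := funext fun p => pdt_eq_fderiv (hF p)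
  have hr : uncurry (pdr f) = fun p => fderiv ℝ F p (0, 1) := funext fun p => pdr_eq_fderiv (hF p)
  rw [pdr_eq_fderiv (ht ▸ (hpartial (1, 0)).differentiableAt),
    pdt_eq_fderiv (hr ▸ (hpartial (0, 1)).differentiableAt), ht, hr,
    (hpartial _).fderiv, (hpartial _).fderiv]
  exact ((hf.contDiffAt).isSymmSndFDerivAt (by simp)) _ _

end PartialDerivatives

section NullCoordinates

variable {f : ℝ → ℝ → ℝ} {V : ℝ → ℝ}

noncomputable def nullForm (f : ℝ → ℝ → ℝ) (a b : ℝ) : ℝ := f ((a + b) / 2) ((a - b) / 2)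

lemma hasDerivAt_nullForm_fst {a b : ℝ}
    (hf : DifferentiableAt ℝ (uncurry f) ((a + b) / 2, (a - b) / 2)) :
    HasDerivAt (nullForm f · b) ((nullForm (pdt f) a b + nullForm (pdr f) a b) / 2) a := by
  have hline : HasDerivAt (fun a' : ℝ => ((a' + b) / 2, (a' - b) / 2))
      ((1 : ℝ) / 2, (1 : ℝ) / 2) a :=
    (((hasDerivAt_id a).add_const b).div_const 2).prodMk
      (((hasDerivAt_id a).sub_const b).div_const 2)
  have h := hf.hasFDerivAt.comp_hasDerivAt a hline
  rw [show ((1 : ℝ) / 2, (1 : ℝ) / 2) = (1 / 2 : ℝ) • ((1 : ℝ), (0 : ℝ))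
      + (1 / 2 : ℝ) • ((0 : ℝ), (1 : ℝ)) by simp, map_add, map_smul, map_smul,
    ← pdt_eq_fderiv hf, ← pdr_eq_fderiv hf] at h
  exact h.congr_deriv (by simp only [nullForm, smul_eq_mul]; ring)

lemma hasDerivAt_nullForm_snd {a b : ℝ}
    (hf : DifferentiableAt ℝ (uncurry f) ((a + b) / 2, (a - b) / 2)) :
    HasDerivAt (nullForm f a ·) ((nullForm (pdt f) a b - nullForm (pdr f) a b) / 2) b := by
  have hline : HasDerivAt (fun b' : ℝ => ((a + b') / 2, (a - b') / 2))
      ((1 : ℝ) / 2, -(1 : ℝ) / 2) b :=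
    (((hasDerivAt_id b).const_add a).div_const 2).prodMk
      (((hasDerivAt_id b).const_sub a).div_const 2)
  have h := hf.hasFDerivAt.comp_hasDerivAt b hline
  rw [show ((1 : ℝ) / 2, -(1 : ℝ) / 2) = (1 / 2 : ℝ) • ((1 : ℝ), (0 : ℝ))
      + (-1 / 2 : ℝ) • ((0 : ℝ), (1 : ℝ)) by simp, map_add, map_smul, map_smul,
    ← pdt_eq_fderiv hf, ← pdr_eq_fderiv hf] at h
  exact h.congr_deriv (by simp only [nullForm, smul_eq_mul]; ring)

lemma continuous_uncurry_nullForm (hf : Continuous (uncurry f)) :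
    Continuous (uncurry (nullForm f)) :=
  show Continuous fun p : ℝ × ℝ => uncurry f ((p.1 + p.2) / 2, (p.1 - p.2) / 2) by fun_prop

theorem isCharacteristicSystem_nullForm (hf : ContDiff ℝ 2 (uncurry f))
    (hwave : ∀ t x, pdtt f t x - pdrr f t x = -(V x * f t x)) :
    IsCharacteristicSystem V (nullForm f)
      (fun a b => (nullForm (pdt f) a b + nullForm (pdr f) a b) / 2)
      (fun a b => (nullForm (pdt f) a b - nullForm (pdr f) a b) / 2) := by
  have ht : ContDiff ℝ 1 (uncurry (pdt f)) :=
    contDiffOn_univ.1 ((contDiffOn_univ.2 hf).uncurry_pdt isOpen_univ (by norm_num))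
  have hr : ContDiff ℝ 1 (uncurry (pdr f)) :=
    contDiffOn_univ.1 ((contDiffOn_univ.2 hf).uncurry_pdr isOpen_univ (by norm_num))
  have hsource : ∀ a b, ((pdt (pdt f) ((a + b) / 2) ((a - b) / 2)
      - pdr (pdr f) ((a + b) / 2) ((a - b) / 2)) / 4)
      = -(V ((a - b) / 2) / 4 * nullForm f a b) := fun a b => by
    rw [show pdt (pdt f) = pdtt f from rfl, show pdr (pdr f) = pdrr f from rfl, hwave]
    simp only [nullForm]; ring
  have hA : ∀ a b, HasDerivAt (fun b => (nullForm (pdt f) a b + nullForm (pdr f) a b) / 2)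
      (-(V ((a - b) / 2) / 4 * nullForm f a b)) b := fun a b => by
    refine (((hasDerivAt_nullForm_snd (ht.differentiable one_ne_zero _)).fun_add
      (hasDerivAt_nullForm_snd (hr.differentiable one_ne_zero _))).div_const 2).congr_deriv ?_
    rw [← hsource]
    simp only [nullForm, pdr_pdt_eq_pdt_pdr hf]; ring
  have hB : ∀ a b, HasDerivAt (fun a => (nullForm (pdt f) a b - nullForm (pdr f) a b) / 2)
      (-(V ((a - b) / 2) / 4 * nullForm f a b)) a := fun a b => by
    refine (((hasDerivAt_nullForm_fst (ht.differentiable one_ne_zero _)).fun_sub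
      (hasDerivAt_nullForm_fst (hr.differentiable one_ne_zero _))).div_const 2).congr_deriv ?_
    rw [← hsource]
    simp only [nullForm, pdr_pdt_eq_pdt_pdr hf]; ring
  have hcontA : Continuous (uncurry fun a b => (nullForm (pdt f) a b + nullForm (pdr f) a b) / 2) :=
    ((continuous_uncurry_nullForm ht.continuous).add
      (continuous_uncurry_nullForm hr.continuous)).div_const 2
  exact ⟨fun a b => hasDerivAt_nullForm_fst (hf.differentiable (by simp) _), hA, hB,
    continuous_uncurry_nullForm hf.continuous, hcontA⟩

end NullCoordinates

/-! ### The Regge–Wheeler equation -/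

section Tortoise

variable {M r : ℝ}

/-- The tortoise coordinate in the variable `s = log (r - 2M)`, where it becomes an increasing
bijection of `ℝ`. -/
noncomputable def tortoiseExp (M s : ℝ) : ℝ := 2 * M + exp s + 2 * M * s

lemma rstar_two_mul_add_exp (M s : ℝ) : rstar M (2 * M + exp s) = tortoiseExp M s := by
  simp [rstar, tortoiseExp]

lemma rstar_eq_tortoiseExp (hr : 2 * M < r) : rstar M r = tortoiseExp M (log (r - 2 * M)) := by
  rw [← rstar_two_mul_add_exp, exp_log (by linarith), add_sub_cancel]

lemma hasDerivAt_tortoiseExp (M s : ℝ) : HasDerivAt (tortoiseExp M) (exp s + 2 * M) s := by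
  refine (((hasDerivAt_exp s).const_add (2 * M)).add
    ((hasDerivAt_id s).const_mul (2 * M))).congr_deriv ?_
  simp

lemma strictMono_tortoiseExp (hM : 0 ≤ M) : StrictMono (tortoiseExp M) := fun s s' h => by
  have := exp_lt_exp.2 h
  unfold tortoiseExp
  nlinarith

lemma surjective_tortoiseExp (hM : 0 < M) : Surjective (tortoiseExp M) := by
  refine Continuous.surjective (by unfold tortoiseExp; fun_prop) ?_ ?_
  · refine tendsto_atTop_mono' _ ?_ tendsto_id
    filter_upwards [eventually_ge_atTop 0] with s hs
    have := add_one_le_exp s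
    simp only [id, tortoiseExp]
    nlinarith
  · refine tendsto_atBot_mono' _ ?_
      (tendsto_atBot_add_const_left _ (2 * M + 1)
        (tendsto_id.const_mul_atBot (show (0 : ℝ) < 2 * M by positivity)))
    filter_upwards [eventually_le_atBot 0] with s hs
    have := exp_le_one_iff.2 hs
    simp only [id, tortoiseExp]
    linarith

noncomputable def tortoiseExpOrderIso (hM : 0 < M) : ℝ ≃o ℝ :=
  (strictMono_tortoiseExp hM.le).orderIsoOfSurjective _ (surjective_tortoiseExp hM)

noncomputable def tortoiseInv (M x : ℝ) : ℝ := 2 * M + exp (invFun (tortoiseExp M) x)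

lemma invFun_tortoiseExp (hM : 0 < M) :
    invFun (tortoiseExp M) = (tortoiseExpOrderIso hM).symm := by
  funext x
  apply (strictMono_tortoiseExp hM.le).injective
  rw [invFun_eq (surjective_tortoiseExp hM x)]
  exact ((tortoiseExpOrderIso hM).apply_symm_apply x).symm

lemma two_mul_lt_tortoiseInv (M x : ℝ) : 2 * M < tortoiseInv M x := by
  simp [tortoiseInv, exp_pos]

lemma rstar_tortoiseInv (hM : 0 < M) (x : ℝ) : rstar M (tortoiseInv M x) = x := by
  rw [tortoiseInv, rstar_two_mul_add_exp, invFun_eq (surjective_tortoiseExp hM x)]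

lemma tortoiseInv_rstar (hM : 0 < M) (hr : 2 * M < r) : tortoiseInv M (rstar M r) = r := by
  rw [rstar_eq_tortoiseExp hr, tortoiseInv,
    leftInverse_invFun (strictMono_tortoiseExp hM.le).injective, exp_log (by linarith)]
  ring

lemma monotoneOn_rstar (hM : 0 ≤ M) : MonotoneOn (rstar M) (Ioi (2 * M)) :=
  fun r hr r' hr' h => by
    rw [rstar_eq_tortoiseExp hr, rstar_eq_tortoiseExp hr']
    exact (strictMono_tortoiseExp hM).monotone
      (log_le_log (by linarith [mem_Ioi.1 hr]) (by linarith))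

lemma contDiff_tortoiseInv (hM : 0 < M) : ContDiff ℝ ∞ (tortoiseInv M) := by
  have h := (tortoiseExpOrderIso hM).toHomeomorph.contDiff_symm_deriv (n := ∞)
    (fun s => by positivity) (hasDerivAt_tortoiseExp M)
    (show ContDiff ℝ ∞ (tortoiseExp M) by unfold tortoiseExp; fun_prop)
  unfold tortoiseInv
  rw [invFun_tortoiseExp hM]
  exact contDiff_const.add (contDiff_exp.comp h)

lemma hasDerivAt_tortoiseInv (hM : 0 < M) (x : ℝ) :
    HasDerivAt (tortoiseInv M) (1 - 2 * M / tortoiseInv M x) x := by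
  set e := tortoiseExpOrderIso hM
  have he : HasDerivAt e.symm (exp (e.symm x) + 2 * M)⁻¹ x :=
    HasDerivAt.of_local_left_inverse e.symm.toHomeomorph.continuous.continuousAt
      (hasDerivAt_tortoiseExp M (e.symm x)) (by positivity)
      (Eventually.of_forall e.apply_symm_apply)
  unfold tortoiseInv
  rw [invFun_tortoiseExp hM]
  refine (he.exp.const_add (2 * M)).congr_deriv ?_
  field_simp
  ring

lemma tortoiseInv_sub_le_exp (hM : 0 < M) (x : ℝ) :
    tortoiseInv M x - 2 * M ≤ exp (x / (2 * M)) := by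
  have h := rstar_tortoiseInv hM x
  rw [tortoiseInv, rstar_two_mul_add_exp, tortoiseExp] at h
  rw [tortoiseInv, add_sub_cancel_left, exp_le_exp, le_div_iff₀ (by positivity)]
  nlinarith [exp_pos (invFun (tortoiseExp M) x)]

lemma tendsto_tortoiseInv_atBot (hM : 0 < M) :
    Tendsto (tortoiseInv M) atBot (𝓝[>] (2 * M)) := by
  have h := (tortoiseExpOrderIso hM).symm.tendsto_atBot
  rw [← invFun_tortoiseExp hM] at h
  refine tendsto_nhdsWithin_iff.2 ⟨?_, Eventually.of_forall (two_mul_lt_tortoiseInv M)⟩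
  show Tendsto (fun x => 2 * M + exp (invFun (tortoiseExp M) x)) atBot (𝓝 (2 * M))
  simpa using (tendsto_exp_atBot.comp h).const_add (2 * M)

end Tortoise

section ReggeWheeler

variable {M : ℝ}

noncomputable def reggeWheelerPotential (M lam x : ℝ) : ℝ :=
  (1 - 2 * M / tortoiseInv M x) * (lam ^ 2 / tortoiseInv M x ^ 2 + 2 * M / tortoiseInv M x ^ 3)

/-- The primitive of `reggeWheelerPotential` vanishing at the horizon `x → -∞`. -/
noncomputable def reggeWheelerPrimitive (M lam x : ℝ) : ℝ :=
  lam ^ 2 / (2 * M) + 1 / (4 * M) - lam ^ 2 / tortoiseInv M x - M / tortoiseInv M x ^ 2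

lemma reggeWheelerPrimitive_eq (hM : 0 < M) (lam x : ℝ) :
    reggeWheelerPrimitive M lam x
      = (1 / (2 * M) - 1 / tortoiseInv M x) * (lam ^ 2 + 1 / 2 + M / tortoiseInv M x) := by
  have := two_mul_lt_tortoiseInv M x
  unfold reggeWheelerPrimitive
  field_simp
  ring

theorem potentialBounds_reggeWheeler (hM : 0 < M) (lam : ℝ) :
    PotentialBounds (reggeWheelerPotential M lam) (reggeWheelerPrimitive M lam)
      ((lam ^ 2 + 1) / (4 * M ^ 2)) (1 / (2 * M)) (lam ^ 2 / (2 * M) + 1 / (4 * M)) where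
  continuous := by
    have hρ := (contDiff_tortoiseInv hM).continuous
    have hρ0 : ∀ x, tortoiseInv M x ≠ 0 := fun x => by
      linarith [two_mul_lt_tortoiseInv M x]
    unfold reggeWheelerPotential
    fun_prop (disch := exact fun x => by simp [hρ0])
  nonneg x := by
    have h := two_mul_lt_tortoiseInv M x
    have : 2 * M / tortoiseInv M x ≤ 1 := (div_le_one (by linarith)).2 h.le
    unfold reggeWheelerPotential
    have : 0 < tortoiseInv M x := by linarith
    positivity
  hasDerivAt x := by
    have h := hasDerivAt_tortoiseInv hM x
    have hρ : tortoiseInv M x ≠ 0 := by linarith [two_mul_lt_tortoiseInv M x]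
    refine ((((hasDerivAt_const x (lam ^ 2)).div h hρ).const_sub _).sub
      ((hasDerivAt_const x M).div (h.pow 2) (pow_ne_zero 2 hρ))).congr_deriv ?_
    unfold reggeWheelerPotential
    simp only [Pi.pow_apply]
    field_simp
    ring
  primitive_nonneg x := by
    have h := two_mul_lt_tortoiseInv M x
    rw [reggeWheelerPrimitive_eq hM]
    have : 1 / tortoiseInv M x ≤ 1 / (2 * M) := by gcongr
    have : 0 < tortoiseInv M x := by linarith
    apply mul_nonneg <;> [linarith; positivity]
  primitive_le x := by
    have := two_mul_lt_tortoiseInv M x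
    have : 0 < tortoiseInv M x := by linarith
    unfold reggeWheelerPrimitive
    have : 0 ≤ lam ^ 2 / tortoiseInv M x := by positivity
    have : 0 ≤ M / tortoiseInv M x ^ 2 := by positivity
    linarith
  primitive_le_exp x := by
    have h := two_mul_lt_tortoiseInv M x
    set ρ := tortoiseInv M x
    have hρ : 0 < ρ := by linarith
    have h₁ : 1 / (2 * M) - 1 / ρ ≤ (ρ - 2 * M) / (4 * M ^ 2) := by
      rw [div_sub_div _ _ (by positivity) hρ.ne', div_le_div_iff₀ (by positivity) (by positivity)]
      have := mul_le_mul_of_nonneg_left (show 4 * M ^ 2 ≤ 2 * M * ρ by nlinarith)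
        (sub_nonneg.2 h.le)
      linarith
    have h₂ : M / ρ ≤ 1 / 2 := by rw [div_le_iff₀ hρ]; linarith
    have h₃ : 0 ≤ 1 / (2 * M) - 1 / ρ := by
      have : 1 / ρ ≤ 1 / (2 * M) := by gcongr
      linarith
    have h₄ := tortoiseInv_sub_le_exp hM x
    rw [reggeWheelerPrimitive_eq hM, one_div_mul_eq_div]
    calc (1 / (2 * M) - 1 / ρ) * (lam ^ 2 + 1 / 2 + M / ρ)
        ≤ (ρ - 2 * M) / (4 * M ^ 2) * (lam ^ 2 + 1) := by
          exact mul_le_mul h₁ (by linarith) (by linarith [div_pos hM hρ, sq_nonneg lam])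
            (div_nonneg (by linarith) (by positivity))
      _ ≤ exp (x / (2 * M)) / (4 * M ^ 2) * (lam ^ 2 + 1) := by gcongr
      _ = (lam ^ 2 + 1) / (4 * M ^ 2) * exp (x / (2 * M)) := by ring
  exponent_pos := by positivity

end ReggeWheeler

section TortoiseField

variable {M lam : ℝ} {u : ℝ → ℝ → ℝ}

noncomputable def tortoiseField (M : ℝ) (u : ℝ → ℝ → ℝ) (t x : ℝ) : ℝ :=
  tortoiseInv M x * u t (tortoiseInv M x)

lemma tortoiseField_zero (hφ : ∀ r, 2 * M < r → u 0 r = 0) (x : ℝ) :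
    tortoiseField M u 0 x = 0 := by
  simp [tortoiseField, hφ _ (two_mul_lt_tortoiseInv M x)]

lemma pdr_tortoiseField_zero (hφ : ∀ r, 2 * M < r → u 0 r = 0) (x : ℝ) :
    pdr (tortoiseField M u) 0 x = 0 := by
  simp [pdr, tortoiseField_zero hφ]

variable (hu : ContDiffOn ℝ ∞ (uncurry u) (univ ×ˢ Ioi (2 * M)))
include hu

lemma differentiableAt_uncurry_of_two_mul_lt {t r : ℝ} (hr : 2 * M < r) :
    DifferentiableAt ℝ (uncurry u) (t, r) :=
  (hu.contDiffAt ((isOpen_univ.prod isOpen_Ioi).mem_nhds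
    (show (t, r) ∈ univ ×ˢ Ioi (2 * M) from ⟨trivial, hr⟩))).differentiableAt (by simp)

lemma contDiff_tortoiseField (hM : 0 < M) : ContDiff ℝ ∞ (uncurry (tortoiseField M u)) := by
  have hρ := contDiff_tortoiseInv hM
  exact (hρ.comp contDiff_snd).mul (hu.comp_contDiff (contDiff_fst.prodMk (hρ.comp contDiff_snd))
    fun p => ⟨trivial, two_mul_lt_tortoiseInv M p.2⟩)

lemma pdt_tortoiseField (t x : ℝ) :
    pdt (tortoiseField M u) t x = tortoiseInv M x * pdt u t (tortoiseInv M x) :=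
  ((hasDerivAt_pdt (differentiableAt_uncurry_of_two_mul_lt hu
    (two_mul_lt_tortoiseInv M x))).const_mul _).deriv

lemma pdtt_tortoiseField (t x : ℝ) :
    pdtt (tortoiseField M u) t x = tortoiseInv M x * pdtt u t (tortoiseInv M x) := by
  have hut := hu.uncurry_pdt (m := ∞) (isOpen_univ.prod isOpen_Ioi) (by simp)
  have h := (hasDerivAt_pdt (differentiableAt_uncurry_of_two_mul_lt hut
    (t := t) (two_mul_lt_tortoiseInv M x))).const_mul (tortoiseInv M x)
  simp only [← funext fun s => pdt_tortoiseField hu s x] at h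
  exact h.deriv

lemma pdr_tortoiseField (hM : 0 < M) (t x : ℝ) :
    pdr (tortoiseField M u) t x = (1 - 2 * M / tortoiseInv M x) * u t (tortoiseInv M x)
      + tortoiseInv M x * (1 - 2 * M / tortoiseInv M x) * pdr u t (tortoiseInv M x) := by
  have hρ := hasDerivAt_tortoiseInv hM x
  have h := hρ.fun_mul ((hasDerivAt_pdr (differentiableAt_uncurry_of_two_mul_lt hu (t := t)
    (two_mul_lt_tortoiseInv M x))).comp x hρ)
  refine h.deriv.trans ?_
  simp only [comp_apply]
  ring

lemma pdtt_sub_pdrr_tortoiseField (hM : 0 < M)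
    (hwave : ∀ t r : ℝ, 2 * M < r →
      -(r / (r - 2 * M)) * pdtt u t r + ((r - 2 * M) / r) * pdrr u t r
        + (2 * (r - M) / r ^ 2) * pdr u t r - lam ^ 2 / r ^ 2 * u t r = 0) (t x : ℝ) :
    pdtt (tortoiseField M u) t x - pdrr (tortoiseField M u) t x
      = -(reggeWheelerPotential M lam x * tortoiseField M u t x) := by
  have hρ := hasDerivAt_tortoiseInv hM x
  have hr := two_mul_lt_tortoiseInv M x
  have hρ0 : tortoiseInv M x ≠ 0 := by linarith
  have hupr := hu.uncurry_pdr (m := ∞) (isOpen_univ.prod isOpen_Ioi) (by simp)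
  have hD : HasDerivAt (fun y => 1 - 2 * M / tortoiseInv M y)
      (2 * M / tortoiseInv M x ^ 2 * (1 - 2 * M / tortoiseInv M x)) x :=
    (((hasDerivAt_const x (2 * M)).div hρ hρ0).const_sub 1).congr_deriv (by field_simp; ring)
  have h₁ := (hasDerivAt_pdr (differentiableAt_uncurry_of_two_mul_lt hu (t := t) hr)).comp x hρ
  have h₂ := (hasDerivAt_pdr (differentiableAt_uncurry_of_two_mul_lt hupr (t := t) hr)).comp x hρ
  have h := (hD.fun_mul h₁).fun_add ((hρ.fun_mul hD).fun_mul h₂)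
  rw [show pdrr (tortoiseField M u) t x = deriv (pdr (tortoiseField M u) t) x from rfl,
    funext (pdr_tortoiseField hu hM t), pdtt_tortoiseField hu]
  erw [h.deriv]
  have hw := hwave t _ hr
  simp only [comp_apply, reggeWheelerPotential, tortoiseField]
  rw [show pdr (pdr u) = pdrr u from rfl]
  set r := tortoiseInv M x
  have hr0 : r - 2 * M ≠ 0 := by linarith
  field_simp at hw ⊢
  linear_combination -r * hw

lemma pdt_tortoiseField_zero_eq_zero (hM : 0 < M) {r₁ r₂ x : ℝ}
    (hψ : ∀ r, 2 * M < r → r ∉ Icc r₁ r₂ → pdt u 0 r = 0) (hr₁ : 2 * M < r₁)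
    (hx : x ∉ Icc (rstar M r₁) (rstar M r₂)) : pdt (tortoiseField M u) 0 x = 0 := by
  have hρ := two_mul_lt_tortoiseInv M x
  rw [pdt_tortoiseField hu, hψ _ hρ fun h => hx ?_, mul_zero]
  rw [← rstar_tortoiseInv hM x]
  exact ⟨monotoneOn_rstar hM.le hr₁ hρ h.1,
    monotoneOn_rstar hM.le hρ (hr₁.trans_le (h.1.trans h.2)) h.2⟩

lemma tendsto_nullForm_pdt_tortoiseField (hM : 0 < M) (hf : IsFwdRadHorizon M u fun _ => 0)
    (a : ℝ) : Tendsto (nullForm (pdt (tortoiseField M u)) a) atTop (𝓝 0) := by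
  have hx : Tendsto (fun b : ℝ => (a - b) / 2) atTop atBot :=
    (tendsto_atBot_add_const_left _ a tendsto_neg_atTop_atBot).atBot_div_const two_pos
  have h := ((tendsto_nhdsWithin_of_tendsto_nhds tendsto_id).mul (hf a)).comp
    ((tendsto_tortoiseInv_atBot hM).comp hx)
  rw [mul_zero] at h
  refine h.congr fun b => ?_
  simp only [comp_apply, id, nullForm, pdt_tortoiseField hu, rstar_tortoiseInv hM]
  rw [show a - (a - b) / 2 = (a + b) / 2 by ring]

end TortoiseField

theorem vanishing_radiation_field_event_horizon
    (M lam : ℝ) (hM : 0 < M)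
    (u : ℝ → ℝ → ℝ) (hu : IsModeSolution M lam u)
    (ψ : ℝ → ℝ) (hφ : ∀ r : ℝ, 2*M < r → u 0 r = 0) (hψ : ∀ r : ℝ, ψ r = pdt u 0 r)
    (hsupp : ∃ r₁ r₂ : ℝ, 2*M < r₁ ∧ r₁ ≤ r₂ ∧
      ∀ r : ℝ, 2*M < r → r ∉ Set.Icc r₁ r₂ → ψ r = 0)
    (hf : IsFwdRadHorizon M u (fun _ => 0)) :
    ∀ r : ℝ, 2*M < r → ψ r = 0 := by
  obtain ⟨r₁, r₂, hr₁, -, hψ₀⟩ := hsupp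
  simp only [hψ] at hψ₀ ⊢
  have hsys := isCharacteristicSystem_nullForm
    ((contDiff_tortoiseField hu.1 hM).of_le (WithTop.coe_le_coe.2 le_top))
    (pdtt_sub_pdrr_tortoiseField hu.1 hM hu.2)
  have hzero := hsys.eta_eq_zero (potentialBounds_reggeWheeler hM lam)
    (fun a => by simpa [nullForm] using tortoiseField_zero hφ a)
    (fun a => by simp [nullForm, pdr_tortoiseField_zero hφ])
    (x₁ := rstar M r₁) (x₂ := rstar M r₂) (fun x hx => by
      simp [nullForm, pdr_tortoiseField_zero hφ, pdt_tortoiseField_zero_eq_zero hu.1 hM hψ₀ hr₁ hx])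
    fun a => (tendsto_nullForm_pdt_tortoiseField hu.1 hM hf a).congr fun b => by ring
  intro r hr
  refine (hasDerivAt_pdt (differentiableAt_uncurry_of_two_mul_lt hu.1 hr)).eq_zero_of_forall_ge
    fun s hs => ?_
  have := hzero (s + rstar M r) (s - rstar M r) (by linarith)
  simp [nullForm, tortoiseField, tortoiseInv_rstar hM hr] at this
  exact this.resolve_left (by linarith)
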